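/- With the same setup, the function 1/a₂(P₁) = r̃₂(P₁) + g(P₁)·r̃₁(P₁) is strictly increasing on [0,P] when h₁ > h₂ > 0; its derivative equals (h₁−h₂)h₁h₂/(h₁+h₁h₂P₁)² · γ(h₁P₁), which is positive for P₁ > 0. -/

import Mathlib

/-!
The weight `g = (1/h₁ + P₁)/(1/h₂ + P₁)` is exactly the factor that turns the derivative of
`γ (h₁ P₁)` into that of `γ (h₂ P₁)`, so the two logarithmic terms of the derivative cancel and
only `g' · γ (h₁ P₁)` survives; `g' > 0` because `h₁ > h₂`, and `γ (h₁ P₁) > 0` for `P₁ > 0`.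
-/

noncomputable def γ (x : ℝ) : ℝ := Real.logb 2 (1 + x) / 2

open Real

lemma γ_pos {x : ℝ} (hx : 0 < x) : 0 < γ x :=
  half_pos (logb_pos one_lt_two (by linarith))

lemma hasDerivAt_γ_const_mul (c : ℝ) {x : ℝ} (hx : 1 + c * x ≠ 0) :
    HasDerivAt (fun y => γ (c * y)) (c / (1 + c * x) / log 2 / 2) x := by
  have hlin : HasDerivAt (fun y => 1 + c * y) c x := by
    simpa using ((hasDerivAt_id x).const_mul c).const_add 1
  simpa [γ, logb] using ((hlin.log hx).div_const (log 2)).div_const 2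

lemma hasDerivAt_add_div_add (a b : ℝ) {x : ℝ} (hx : b + x ≠ 0) :
    HasDerivAt (fun y => (a + y) / (b + y)) ((b - a) / (b + x) ^ 2) x := by
  refine (((hasDerivAt_id x).const_add a).div ((hasDerivAt_id x).const_add b) hx).congr_deriv ?_
  simp only [id]
  ring

lemma hasDerivAt_inv_a₂ {h₁ h₂ : ℝ} (P : ℝ) {x : ℝ} (hh₁ : h₁ ≠ 0) (hh₂ : h₂ ≠ 0)
    (h₁x : 1 + h₁ * x ≠ 0) (h₂x : 1 + h₂ * x ≠ 0) :
    HasDerivAt (fun P₁ => (γ (h₂ * P) - γ (h₂ * P₁)) + (1 / h₁ + P₁) / (1 / h₂ + P₁) * γ (h₁ * P₁))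
      ((h₁ - h₂) * h₁ * h₂ / (h₁ + h₁ * h₂ * x) ^ 2 * γ (h₁ * x)) x := by
  have hden : 1 / h₂ + x ≠ 0 := by
    rwa [show 1 / h₂ + x = (1 + h₂ * x) / h₂ by field_simp, div_ne_zero_iff, and_iff_left hh₂]
  refine (((hasDerivAt_const x (γ (h₂ * P))).sub (hasDerivAt_γ_const_mul h₂ h₂x)).add
    ((hasDerivAt_add_div_add (1 / h₁) (1 / h₂) hden).mul
      (hasDerivAt_γ_const_mul h₁ h₁x))).congr_deriv ?_
  have hcancel : (1 / h₁ + x) / (1 / h₂ + x) * (h₁ / (1 + h₁ * x)) = h₂ / (1 + h₂ * x) := by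
    field_simp
  rw [mul_div_assoc', mul_div_assoc', hcancel]
  field_simp
  ring

lemma inv_a₂_deriv_pos {h₁ h₂ x : ℝ} (hh : h₂ < h₁) (hh₂ : 0 < h₂) (hx : 0 < x) :
    0 < (h₁ - h₂) * h₁ * h₂ / (h₁ + h₁ * h₂ * x) ^ 2 * γ (h₁ * x) := by
  have hh₁ : 0 < h₁ := hh₂.trans hh
  have : 0 < h₁ - h₂ := sub_pos.mpr hh
  have := γ_pos (mul_pos hh₁ hx)
  positivity

theorem gbc_inv_a₂_strictMono_general (h₁ h₂ P : ℝ)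
    (hh : h₂ < h₁) (hh₂ : 0 < h₂) :
    let g : ℝ → ℝ := fun P₁ => (1 / h₁ + P₁) / (1 / h₂ + P₁)
    let f : ℝ → ℝ := fun P₁ => (γ (h₂ * P) - γ (h₂ * P₁)) + g P₁ * γ (h₁ * P₁)
    StrictMonoOn f (Set.Icc 0 P) ∧
    ∀ P₁ ∈ Set.Icc (0 : ℝ) P,
      deriv f P₁ = (h₁ - h₂) * h₁ * h₂ / (h₁ + h₁ * h₂ * P₁) ^ 2 * γ (h₁ * P₁) ∧
      (0 < P₁ → 0 < deriv f P₁) := by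
  intro g f
  have hf : ∀ x : ℝ, 0 ≤ x →
      HasDerivAt f ((h₁ - h₂) * h₁ * h₂ / (h₁ + h₁ * h₂ * x) ^ 2 * γ (h₁ * x)) x := fun x hx =>
    hasDerivAt_inv_a₂ P (hh₂.trans hh).ne' hh₂.ne' (by nlinarith) (by nlinarith)
  refine ⟨strictMonoOn_of_deriv_pos (convex_Icc 0 P)
    (fun x hx => (hf x hx.1).continuousAt.continuousWithinAt) fun x hx => ?_, fun x hx => ?_⟩
  · rw [interior_Icc] at hx
    rw [(hf x hx.1.le).deriv]
    exact inv_a₂_deriv_pos hh hh₂ hx.1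
  · rw [(hf x hx.1).deriv]
    exact ⟨rfl, inv_a₂_deriv_pos hh hh₂⟩

theorem gbc_inv_a₂_strictMono (h₁ h₂ P : ℝ)
    (hh : h₂ < h₁) (hh₂ : 0 < h₂) (hP : 0 < P) :
    let g : ℝ → ℝ := fun P₁ => (1 / h₁ + P₁) / (1 / h₂ + P₁)
    let f : ℝ → ℝ := fun P₁ => (γ (h₂ * P) - γ (h₂ * P₁)) + g P₁ * γ (h₁ * P₁)
    StrictMonoOn f (Set.Icc 0 P) ∧
    ∀ P₁ ∈ Set.Icc (0 : ℝ) P,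
      deriv f P₁ = (h₁ - h₂) * h₁ * h₂ / (h₁ + h₁ * h₂ * P₁) ^ 2 * γ (h₁ * P₁) ∧
      (0 < P₁ → 0 < deriv f P₁) :=
  gbc_inv_a₂_strictMono_general h₁ h₂ P hh hh₂
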